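/- arXiv:2306.14290 — 2 statements merged into one kernel-verified Lean document; each statement's English description precedes it below -/
import Mathlib

section
/- Let H be an n×n real symmetric matrix, g ∈ ℝⁿ, f₀ ∈ ℝ and σ > 0, and let m(s) = f₀ + gᵀs + (1/2)sᵀHs + (σ/3)‖s‖³ be the cubic regularized model. If s* ∈ ℝⁿ is a global minimizer of m over ℝⁿ and the matrix H + σ‖s*‖I is positive definite, then s* is the unique global minimizer of m: every s ∈ ℝⁿ with m(s) = m(s*) satisfies s = s*. -/
/-!
With `c = σ‖s*‖` the model has the exact expansion around `s*`
`m(s) - m(s*) = ∇m(s*)ᵀ(s - s*) + ½ (s - s*)ᵀ(H + cI)(s - s*) + (σ/6)(‖s‖ - ‖s*‖)²(2‖s‖ + ‖s*‖)`.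
At a global minimizer the gradient vanishes, and the cubic remainder is nonnegative, so positive
definiteness of `H + cI` gives `m(s) > m(s*)` for every `s ≠ s*`.
-/

open Matrix Filter Topology RealInnerProductSpace

theorem sq_norm_sub_norm_mul_le {F : Type*} [SeminormedAddCommGroup F] (x y : F) :
    (‖x‖ - ‖y‖) ^ 2 * (2 * ‖x‖ + ‖y‖) ≤ ‖x - y‖ ^ 2 * (3 * ‖y‖ + 2 * ‖x - y‖) := by
  obtain ⟨hlo, hhi⟩ := abs_le.mp (abs_norm_sub_norm_le x y)
  exact mul_le_mul (sq_le_sq' hlo hhi) (by linarith) (by positivity) (sq_nonneg _)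

section CubicModel

variable {E : Type*} [NormedAddCommGroup E] [InnerProductSpace ℝ E]

noncomputable def cubicModel (f₀ : ℝ) (g : E) (A : E →ₗ[ℝ] E) (σ : ℝ) (s : E) : ℝ :=
  f₀ + ⟪g, s⟫ + 1 / 2 * ⟪s, A s⟫ + σ / 3 * ‖s‖ ^ 3

noncomputable def cubicModelGrad (g : E) (A : E →ₗ[ℝ] E) (σ : ℝ) (s : E) : E :=
  g + A s + (σ * ‖s‖) • s

variable {f₀ σ : ℝ} {g : E} {A : E →ₗ[ℝ] E}

theorem cubicModel_sub_cubicModel (hA : A.IsSymmetric) (x y : E) :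
    cubicModel f₀ g A σ x - cubicModel f₀ g A σ y =
      ⟪cubicModelGrad g A σ y, x - y⟫ + 1 / 2 * (⟪x - y, A (x - y)⟫ + σ * ‖y‖ * ‖x - y‖ ^ 2)
        + σ / 6 * ((‖x‖ - ‖y‖) ^ 2 * (2 * ‖x‖ + ‖y‖)) := by
  have hxy : ⟪x, A y⟫ = ⟪y, A x⟫ := by rw [← hA, real_inner_comm]
  simp only [cubicModel, cubicModelGrad, norm_sub_sq_real, map_sub, inner_sub_left,
    inner_sub_right, inner_add_left, real_inner_smul_left, real_inner_self_eq_norm_sq, hA y x,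
    hxy, real_inner_comm y (A y), real_inner_comm y x]
  ring

theorem cubicModelGrad_eq_zero_of_forall_le (hA : A.IsSymmetric) (hσ : 0 ≤ σ) {y : E}
    (hmin : ∀ s, cubicModel f₀ g A σ y ≤ cubicModel f₀ g A σ s) :
    cubicModelGrad g A σ y = 0 := by
  set u := cubicModelGrad g A σ y with hu_def
  set K := 1 / 2 * (⟪u, A u⟫ + σ * ‖y‖ * ‖u‖ ^ 2) + σ / 6 * (‖u‖ ^ 2 * (3 * ‖y‖ + 2 * ‖u‖))
    with hK_def
  -- a step of length `t` along `-u` lowers the model by `t‖u‖² - O(t²)`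
  have hdescent : ∀ t ∈ Set.Ioc (0 : ℝ) 1, ‖u‖ ^ 2 ≤ t * K := by
    rintro t ⟨ht₀, ht₁⟩
    have hstep : y - t • u - y = -(t • u) := sub_sub_cancel_left _ _
    have hcubic := sq_norm_sub_norm_mul_le (y - t • u) y
    have hexpand := cubicModel_sub_cubicModel (f₀ := f₀) (g := g) (σ := σ) hA (y - t • u) y
    rw [hstep, norm_neg, norm_smul, Real.norm_of_nonneg ht₀.le] at hcubic
    simp only [hstep, norm_neg, norm_smul, Real.norm_of_nonneg ht₀.le, inner_neg_right,
      map_neg, inner_neg_left, neg_neg, map_smul, real_inner_smul_left, real_inner_smul_right,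
      ← hu_def, real_inner_self_eq_norm_sq] at hexpand
    have hcubic' : (‖y - t • u‖ - ‖y‖) ^ 2 * (2 * ‖y - t • u‖ + ‖y‖)
        ≤ t ^ 2 * (‖u‖ ^ 2 * (3 * ‖y‖ + 2 * ‖u‖)) := by
      refine hcubic.trans ?_
      rw [mul_pow, mul_assoc]
      gcongr
      exact mul_le_of_le_one_left (norm_nonneg u) ht₁
    have hgain : t * ‖u‖ ^ 2 ≤ t * (t * K) := by
      rw [hK_def]
      linarith [hmin (y - t • u), mul_le_mul_of_nonneg_left hcubic' (by positivity : 0 ≤ σ / 6)]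
    exact le_of_mul_le_mul_left hgain ht₀
  have hlim : Tendsto (fun t => t * K) (𝓝[>] 0) (𝓝 0) := by
    simpa using ((continuous_mul_const K).tendsto 0).mono_left nhdsWithin_le_nhds
  have hu : ‖u‖ ^ 2 ≤ 0 := ge_of_tendsto hlim (eventually_of_mem (Ioc_mem_nhdsGT one_pos) hdescent)
  simpa using hu

theorem cubicModel_lt_of_ne (hA : A.IsSymmetric) (hσ : 0 ≤ σ) {y : E}
    (hmin : ∀ s, cubicModel f₀ g A σ y ≤ cubicModel f₀ g A σ s)
    (hpos : ∀ d ≠ 0, 0 < ⟪d, A d⟫ + σ * ‖y‖ * ‖d‖ ^ 2) {x : E} (hxy : x ≠ y) :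
    cubicModel f₀ g A σ y < cubicModel f₀ g A σ x := by
  have hexpand := cubicModel_sub_cubicModel (f₀ := f₀) (g := g) (σ := σ) hA x y
  rw [cubicModelGrad_eq_zero_of_forall_le hA hσ hmin, inner_zero_left, zero_add] at hexpand
  have hquad := hpos (x - y) (sub_ne_zero.mpr hxy)
  have hcubic : 0 ≤ σ / 6 * ((‖x‖ - ‖y‖) ^ 2 * (2 * ‖x‖ + ‖y‖)) := by positivity
  linarith

end CubicModel

section Matrix

variable {n : Type*} [Fintype n] [DecidableEq n]

theorem inner_toEuclideanLin_self (H : Matrix n n ℝ) (s : EuclideanSpace ℝ n) :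
    ⟪s, toEuclideanLin H s⟫ = s ⬝ᵥ H *ᵥ s := by
  rw [EuclideanSpace.inner_eq_star_dotProduct, star_trivial, dotProduct_comm]
  rfl

theorem cubicModel_toEuclideanLin (f₀ : ℝ) (g : EuclideanSpace ℝ n) (H : Matrix n n ℝ) (σ : ℝ)
    (s : EuclideanSpace ℝ n) :
    cubicModel f₀ g (toEuclideanLin H) σ s
      = f₀ + g ⬝ᵥ s + 1 / 2 * (s ⬝ᵥ H *ᵥ s) + σ / 3 * ‖s‖ ^ 3 := by
  rw [cubicModel, inner_toEuclideanLin_self, EuclideanSpace.inner_eq_star_dotProduct,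
    star_trivial, dotProduct_comm]

theorem Matrix.PosDef.inner_toEuclideanLin_add_pos {H : Matrix n n ℝ} {c : ℝ}
    (hpd : (H + c • (1 : Matrix n n ℝ)).PosDef) {d : EuclideanSpace ℝ n} (hd : d ≠ 0) :
    0 < ⟪d, toEuclideanLin H d⟫ + c * ‖d‖ ^ 2 := by
  have hquad := hpd.dotProduct_mulVec_pos (x := WithLp.ofLp d) (by simpa using hd)
  rw [star_trivial, add_mulVec, smul_mulVec, one_mulVec, dotProduct_add, dotProduct_smul,
    smul_eq_mul] at hquad
  rwa [inner_toEuclideanLin_self, ← real_inner_self_eq_norm_sq,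
    EuclideanSpace.inner_eq_star_dotProduct, star_trivial]

end Matrix

/-- If `s*` is a global minimizer of the cubic regularized model
`m(s) = f₀ + gᵀs + (1/2)sᵀHs + (σ/3)‖s‖³` and `H + σ‖s*‖I` is positive
definite, then `s*` is the unique global minimizer of `m`. -/
theorem cubic_model_global_minimizer_unique
    (n : ℕ) (H : Matrix (Fin n) (Fin n) ℝ) (hH : H.IsSymm)
    (g : EuclideanSpace ℝ (Fin n)) (f₀ σ : ℝ) (hσ : 0 < σ)
    (m : EuclideanSpace ℝ (Fin n) → ℝ)
    (hm : ∀ s : EuclideanSpace ℝ (Fin n),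
      m s = f₀ + g ⬝ᵥ s + (1 / 2) * (s ⬝ᵥ H.mulVec s) + (σ / 3) * ‖s‖ ^ 3)
    (sstar : EuclideanSpace ℝ (Fin n))
    (hmin : ∀ s : EuclideanSpace ℝ (Fin n), m sstar ≤ m s)
    (hpd : (H + (σ * ‖sstar‖) • (1 : Matrix (Fin n) (Fin n) ℝ)).PosDef) :
    ∀ s : EuclideanSpace ℝ (Fin n), m s = m sstar → s = sstar := by
  have hA : (toEuclideanLin H).IsSymmetric :=
    isSymmetric_toEuclideanLin_iff.mpr (isHermitian_iff_isSymm.mpr hH)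
  obtain rfl : m = cubicModel f₀ g (toEuclideanLin H) σ :=
    funext fun s => (hm s).trans (cubicModel_toEuclideanLin f₀ g H σ s).symm
  intro s hs
  by_contra hne
  exact (cubicModel_lt_of_ne hA hσ.le hmin (fun d hd => hpd.inner_toEuclideanLin_add_pos hd)
    hne).ne' hs
end

section
/- Let f : ℝⁿ → ℝ be twice continuously differentiable with L₂-Lipschitz Hessian, let x ∈ ℝⁿ, g = ∇f(x), H = ∇²f(x), and T(s) = f(x) + gᵀs + (1/2)sᵀHs. Let σ > 0, r > 0, C_up > 0, η₁ ∈ (0,1), and let s ∈ ℝⁿ, s ≠ 0, satisfy T(0) − T(s) ≥ (1/2)σr‖s‖² and ‖s‖ ≤ C_up r. If σ ≥ L₂C_up/(3(1 − η₁)), then f(x) − f(x+s) ≥ η₁ (T(0) − T(s)), i.e. the iteration is successful. -/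
/-!
Along the segment `t ↦ x + t • s`, the Lipschitz bound on the Hessian makes the error of the
linear model of `∇f` at most `(L₂ / 2) t² ‖s‖²`; integrating once more (via the mean value
inequality) bounds the error of the quadratic model `T` by `(L₂ / 6) ‖s‖³`. Since
`‖s‖ ≤ C_up r`, this cubic error is at most `(L₂ C_up / 6) r ‖s‖²`, which the choice of `σ` makes
at most `(1 - η₁)` times the guaranteed model decrease `(1/2) σ r ‖s‖²`.
-/

open Set RealInnerProductSpace

theorem norm_image_sub_le_of_norm_deriv_le_mul_pow {F : Type*} [NormedAddCommGroup F]
    [NormedSpace ℝ F] {G G' : ℝ → F} {c : ℝ} (k : ℕ)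
    (hG : ∀ t ∈ Icc (0 : ℝ) 1, HasDerivAt G (G' t) t)
    (bound : ∀ t ∈ Ico (0 : ℝ) 1, ‖G' t‖ ≤ c * t ^ k) :
    ‖G 1 - G 0‖ ≤ c / (k + 1) := by
  have hB : ∀ t : ℝ, HasDerivAt (fun t => c / (k + 1) * t ^ (k + 1)) (c * t ^ k) t := by
    intro t
    refine ((hasDerivAt_pow (k + 1) t).const_mul (c / (k + 1))).congr_deriv ?_
    field_simp
    push_cast
    ring
  have := image_norm_le_of_norm_deriv_right_le_deriv_boundary (f := fun t => G t - G 0)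
    (fun t ht => ((hG t ht).continuousAt.sub continuousAt_const).continuousWithinAt)
    (fun t ht => ((hG t (Ico_subset_Icc_self ht)).sub_const (G 0)).hasDerivWithinAt)
    (by simp) hB bound (right_mem_Icc.2 zero_le_one)
  simpa using this

section
variable {E F : Type*} [NormedAddCommGroup E] [NormedSpace ℝ E]
  [NormedAddCommGroup F] [NormedSpace ℝ F]

theorem norm_sub_sub_fderiv_le_of_lipschitz_fderiv {g : E → F} {L : ℝ}
    (hg : Differentiable ℝ g)
    (hLip : ∀ y z, ‖fderiv ℝ g y - fderiv ℝ g z‖ ≤ L * ‖y - z‖) (x u : E) :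
    ‖g (x + u) - g x - fderiv ℝ g x u‖ ≤ L / 2 * ‖u‖ ^ 2 := by
  have hderiv : ∀ τ : ℝ, HasDerivAt (fun τ : ℝ => g (x + τ • u) - τ • fderiv ℝ g x u)
      ((fderiv ℝ g (x + τ • u) - fderiv ℝ g x) u) τ := by
    intro τ
    have hline : HasDerivAt (fun τ : ℝ => x + τ • u) u τ := by
      simpa using ((hasDerivAt_id τ).smul_const u).const_add x
    rw [sub_apply]
    exact ((hg _).hasFDerivAt.comp_hasDerivAt τ hline).sub
      (by simpa using (hasDerivAt_id' τ).smul_const (fderiv ℝ g x u))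
  have bound : ∀ τ ∈ Ico (0 : ℝ) 1,
      ‖(fderiv ℝ g (x + τ • u) - fderiv ℝ g x) u‖ ≤ L * ‖u‖ ^ 2 * τ ^ 1 := by
    intro τ hτ
    calc ‖(fderiv ℝ g (x + τ • u) - fderiv ℝ g x) u‖
        ≤ ‖fderiv ℝ g (x + τ • u) - fderiv ℝ g x‖ * ‖u‖ := ContinuousLinearMap.le_opNorm _ _
      _ ≤ L * ‖τ • u‖ * ‖u‖ := by
          gcongr
          simpa using hLip (x + τ • u) x
      _ = L * ‖u‖ ^ 2 * τ ^ 1 := by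
          rw [norm_smul, Real.norm_of_nonneg hτ.1]
          ring
  have := norm_image_sub_le_of_norm_deriv_le_mul_pow 1 (fun τ _ => hderiv τ) bound
  convert this using 2
  · simp only [one_smul, zero_smul, add_zero, sub_zero]
    abel
  · push_cast
    ring
end

section
variable {E : Type*} [NormedAddCommGroup E] [InnerProductSpace ℝ E] [CompleteSpace E]

theorem ContDiff.gradient {f : E → ℝ} {n : WithTop ℕ∞} (hf : ContDiff ℝ (n + 1) f) :
    ContDiff ℝ n (gradient f) :=
  (InnerProductSpace.toDual ℝ E).symm.contDiff.comp (hf.fderiv_right le_rfl)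

theorem abs_sub_taylor_le_of_lipschitz_hessian {f : E → ℝ} {L : ℝ}
    (hf : Differentiable ℝ f) (hgrad : Differentiable ℝ (gradient f))
    (hLip : ∀ y z, ‖fderiv ℝ (gradient f) y - fderiv ℝ (gradient f) z‖ ≤ L * ‖y - z‖) (x s : E) :
    |f (x + s) - (f x + ⟪gradient f x, s⟫ + 1 / 2 * ⟪s, fderiv ℝ (gradient f) x s⟫)| ≤
      L / 6 * ‖s‖ ^ 3 := by
  set H := fderiv ℝ (gradient f) x
  have hderiv : ∀ t : ℝ, HasDerivAt
      (fun t : ℝ => f (x + t • s) - t * ⟪gradient f x, s⟫ - t ^ 2 / 2 * ⟪s, H s⟫)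
      ⟪gradient f (x + t • s) - gradient f x - H (t • s), s⟫ t := by
    intro t
    have hline : HasDerivAt (fun t : ℝ => x + t • s) s t := by
      simpa using ((hasDerivAt_id t).smul_const s).const_add x
    have hsq : HasDerivAt (fun t : ℝ => t ^ 2 / 2) t t := by
      simpa using (hasDerivAt_pow 2 t).div_const 2
    refine ((((hf _).hasGradientAt.hasFDerivAt.comp_hasDerivAt t hline).sub
      ((hasDerivAt_id' t).mul_const _)).sub (hsq.mul_const _)).congr_deriv ?_
    simp [inner_sub_left, real_inner_smul_left, real_inner_comm s (H s)]
  have bound : ∀ t ∈ Ico (0 : ℝ) 1,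
      ‖⟪gradient f (x + t • s) - gradient f x - H (t • s), s⟫‖ ≤ L / 2 * ‖s‖ ^ 3 * t ^ 2 := by
    intro t ht
    calc ‖⟪gradient f (x + t • s) - gradient f x - H (t • s), s⟫‖
        ≤ ‖gradient f (x + t • s) - gradient f x - H (t • s)‖ * ‖s‖ := norm_inner_le_norm _ _
      _ ≤ L / 2 * ‖t • s‖ ^ 2 * ‖s‖ := by
          gcongr
          exact norm_sub_sub_fderiv_le_of_lipschitz_fderiv hgrad hLip x (t • s)
      _ = L / 2 * ‖s‖ ^ 3 * t ^ 2 := by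
          rw [norm_smul, Real.norm_of_nonneg ht.1]
          ring
  have := norm_image_sub_le_of_norm_deriv_le_mul_pow 2 (fun t _ => hderiv t) bound
  rw [Real.norm_eq_abs] at this
  convert this using 2
  · simp only [one_smul, zero_smul, add_zero]
    ring
  · push_cast
    ring
end

theorem successful_iteration_regularized_newton_general
    (n : ℕ) (f : EuclideanSpace ℝ (Fin n) → ℝ) (L₂ : ℝ) (hL₂ : 0 < L₂)
    (hf : ContDiff ℝ 2 f)
    (hLip : ∀ y z : EuclideanSpace ℝ (Fin n),
      ‖fderiv ℝ (gradient f) y - fderiv ℝ (gradient f) z‖ ≤ L₂ * ‖y - z‖)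
    (x : EuclideanSpace ℝ (Fin n))
    (T : EuclideanSpace ℝ (Fin n) → ℝ)
    (hT : ∀ s : EuclideanSpace ℝ (Fin n),
      T s = f x + ⟪gradient f x, s⟫ + (1 / 2) * ⟪s, fderiv ℝ (gradient f) x s⟫)
    (σ r C_up η₁ : ℝ) (hr : 0 < r)
    (hη₁ : η₁ ∈ Set.Ioo (0 : ℝ) 1)
    (s : EuclideanSpace ℝ (Fin n))
    (hdec : T 0 - T s ≥ (1 / 2) * σ * r * ‖s‖ ^ 2)
    (hnorm : ‖s‖ ≤ C_up * r)
    (hσbig : σ ≥ L₂ * C_up / (3 * (1 - η₁))) :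
    f x - f (x + s) ≥ η₁ * (T 0 - T s) := by
  have hgrad : Differentiable ℝ (gradient f) :=
    (ContDiff.gradient (n := 1) hf).differentiable one_ne_zero
  have hmodel : f (x + s) - T s ≤ L₂ / 6 * ‖s‖ ^ 3 := by
    rw [hT s]
    exact (le_abs_self _).trans (abs_sub_taylor_le_of_lipschitz_hessian
      (hf.differentiable two_ne_zero) hgrad hLip x s)
  have hT0 : T 0 = f x := by simp [hT]
  have hLC : L₂ * C_up ≤ 3 * (1 - η₁) * σ := by
    have hη : 0 < 3 * (1 - η₁) := by linarith [hη₁.2]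
    rw [ge_iff_le, div_le_iff₀ hη] at hσbig
    linarith
  have hcubic : L₂ / 6 * ‖s‖ ^ 3 ≤ (1 - η₁) * (T 0 - T s) :=
    calc L₂ / 6 * ‖s‖ ^ 3 = L₂ / 6 * ‖s‖ * ‖s‖ ^ 2 := by ring
      _ ≤ L₂ / 6 * (C_up * r) * ‖s‖ ^ 2 := by gcongr
      _ = L₂ * C_up / 6 * (r * ‖s‖ ^ 2) := by ring
      _ ≤ 3 * (1 - η₁) * σ / 6 * (r * ‖s‖ ^ 2) := by gcongr
      _ = (1 - η₁) * (1 / 2 * σ * r * ‖s‖ ^ 2) := by ring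
      _ ≤ (1 - η₁) * (T 0 - T s) := by gcongr; linarith [hη₁.2]
  linarith

/-- If the step `s ≠ 0` satisfies `T(0) - T(s) ≥ (1/2)σr‖s‖²` and `‖s‖ ≤ C_up r`, and
`σ ≥ L₂C_up/(3(1-η₁))`, then the iteration is successful:
`f(x) - f(x+s) ≥ η₁(T(0) - T(s))`. -/
theorem successful_iteration_regularized_newton
    (n : ℕ) (f : EuclideanSpace ℝ (Fin n) → ℝ) (L₂ : ℝ) (hL₂ : 0 < L₂)
    (hf : ContDiff ℝ 2 f)
    (hLip : ∀ y z : EuclideanSpace ℝ (Fin n),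
      ‖fderiv ℝ (gradient f) y - fderiv ℝ (gradient f) z‖ ≤ L₂ * ‖y - z‖)
    (x : EuclideanSpace ℝ (Fin n))
    (T : EuclideanSpace ℝ (Fin n) → ℝ)
    (hT : ∀ s : EuclideanSpace ℝ (Fin n),
      T s = f x + ⟪gradient f x, s⟫ + (1 / 2) * ⟪s, fderiv ℝ (gradient f) x s⟫)
    (σ r C_up η₁ : ℝ) (hσ : 0 < σ) (hr : 0 < r) (hC : 0 < C_up)
    (hη₁ : η₁ ∈ Set.Ioo (0 : ℝ) 1)
    (s : EuclideanSpace ℝ (Fin n)) (hs : s ≠ 0)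
    (hdec : T 0 - T s ≥ (1 / 2) * σ * r * ‖s‖ ^ 2)
    (hnorm : ‖s‖ ≤ C_up * r)
    (hσbig : σ ≥ L₂ * C_up / (3 * (1 - η₁))) :
    f x - f (x + s) ≥ η₁ * (T 0 - T s) :=
  successful_iteration_regularized_newton_general n f L₂ hL₂ hf hLip x T hT σ r C_up η₁ hr hη₁ s
    hdec hnorm hσbig
end
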